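/- arXiv:1401.3780 — 2 statements merged into one kernel-verified Lean document; each statement's English description precedes it below -/
import Mathlib

section
/- For vertices x,y in the same copy H_i inside a corona product G⊙H (G connected non-trivial), the set of distinctive vertices of x and y in G⊙H equals (N_{H_i}(x) △ N_{H_i}(y)) ∪ {x,y}. -/
open SimpleGraph

/-- `S` is a `k`-metric generator for `G`: every pair of distinct vertices is
distinguished (has different distances) by at least `k` vertices of `S`. -/
def kMetricGen {V : Type*} [Fintype V] (G : SimpleGraph V) (k : ℕ) (S : Set V) : Prop :=
  ∀ u v : V, u ≠ v → ∃ T : Finset V, ↑T ⊆ S ∧ k ≤ T.card ∧ ∀ w ∈ T, G.dist u w ≠ G.dist v w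

/-- `G` is `k`-metric dimensional: `k` is the largest integer admitting a `k`-metric generator. -/
def kMetricDimensional {V : Type*} [Fintype V] (G : SimpleGraph V) (k : ℕ) : Prop :=
  (∃ S : Set V, kMetricGen G k S) ∧ ∀ k' : ℕ, (∃ S : Set V, kMetricGen G k' S) → k' ≤ k

/-- The `k`-metric dimension of `G`. -/
noncomputable def kMetricDim {V : Type*} [Fintype V] (G : SimpleGraph V) (k : ℕ) : ℕ :=
  sInf {m | ∃ S : Finset V, kMetricGen G k ↑S ∧ S.card = m}

/-- A `k`-metric basis: a minimum-cardinality `k`-metric generator. -/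
def kMetricBasis {V : Type*} [Fintype V] (G : SimpleGraph V) (k : ℕ) (B : Finset V) : Prop :=
  kMetricGen G k ↑B ∧ ∀ T : Finset V, kMetricGen G k ↑T → B.card ≤ T.card

/-- Auxiliary relation for the corona product. -/
def coronaRel {V : Type*} {W : V → Type*} (G : SimpleGraph V) (H : ∀ v, SimpleGraph (W v)) :
    (V ⊕ (Σ v, W v)) → (V ⊕ (Σ v, W v)) → Prop
  | Sum.inl a, Sum.inl b => G.Adj a b
  | Sum.inl a, Sum.inr b => a = b.1
  | Sum.inr a, Sum.inr b => ∃ h : a.1 = b.1, (H b.1).Adj (h ▸ a.2) b.2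
  | _, _ => False

/-- The corona product `G ⊙ 𝓗`: one copy of `G`, and each vertex `v` of `G` joined by an
edge to every vertex of its own copy of `H v`. -/
def corona {V : Type*} {W : V → Type*} (G : SimpleGraph V) (H : ∀ v, SimpleGraph (W v)) :
    SimpleGraph (V ⊕ (Σ v, W v)) :=
  SimpleGraph.fromRel (coronaRel G H)

/-- The join `K₁ + H`: a new vertex (`none`) adjacent to every vertex of `H`. -/
def K1join {U : Type*} (H : SimpleGraph U) : SimpleGraph (Option U) :=
  SimpleGraph.fromRel (fun x y => match x, y with
    | none, some _ => True
    | some a, some b => H.Adj a b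
    | _, _ => False)

/-- `𝒞(H) = min_{x ≠ y} |(N(x) △ N(y)) ∪ {x,y}|`. -/
noncomputable def CC {U : Type*} (H : SimpleGraph U) : ℕ :=
  sInf {m | ∃ x y : U, x ≠ y ∧
    (symmDiff (H.neighborSet x) (H.neighborSet y) ∪ {x, y}).ncard = m}

section Helpers

variable {V : Type*} {W : V → Type*} {G : SimpleGraph V} {H : ∀ v, SimpleGraph (W v)}

lemma corona_adj_inl_inl {u u' : V} :
    (corona G H).Adj (Sum.inl u) (Sum.inl u') ↔ G.Adj u u' := by
  constructor
  · rintro ⟨hne, h | h⟩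
    · exact h
    · exact h.symm
  · intro h
    exact ⟨by simpa using h.ne, Or.inl h⟩

lemma corona_adj_inl_inr {u : V} {b : Σ v, W v} :
    (corona G H).Adj (Sum.inl u) (Sum.inr b) ↔ u = b.1 := by
  constructor
  · rintro ⟨hne, h | h⟩
    · exact h
    · exact h.elim
  · intro h
    exact ⟨by simp, Or.inl h⟩

lemma corona_adj_inr_inr {v : V} {a b : W v} :
    (corona G H).Adj (Sum.inr ⟨v, a⟩) (Sum.inr ⟨v, b⟩) ↔ (H v).Adj a b := by
  constructor
  · rintro ⟨hne, h | h⟩ <;> obtain ⟨h1, h2⟩ := h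
    · exact h2
    · exact h2.symm
  · intro h
    refine ⟨?_, Or.inl ⟨rfl, h⟩⟩
    simp [h.ne]

lemma corona_adj_inr_iff {v : V} {a : W v} {z : V ⊕ (Σ u, W u)} :
    (corona G H).Adj (Sum.inr ⟨v, a⟩) z ↔
      z = Sum.inl v ∨ ∃ b : W v, z = Sum.inr ⟨v, b⟩ ∧ (H v).Adj a b := by
  cases z with
  | inl u =>
      rw [(corona G H).adj_comm, corona_adj_inl_inr]
      simp [eq_comm]
  | inr b =>
      obtain ⟨u, w⟩ := b
      constructor
      · intro h
        have huv : u = v := by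
          rcases h with ⟨hne, ⟨h1, -⟩ | ⟨h1, -⟩⟩
          · exact h1.symm
          · exact h1
        subst huv
        exact Or.inr ⟨w, rfl, (corona_adj_inr_inr).mp h⟩
      · rintro (h | ⟨b, hb, hadj⟩)
        · exact absurd h (by simp)
        · simp only [Sum.inr.injEq, Sigma.mk.inj_iff] at hb
          obtain ⟨rfl, hb2⟩ := hb
          cases hb2
          exact (corona_adj_inr_inr).mpr hadj

def coronaProj : (V ⊕ (Σ u, W u)) → V
  | Sum.inl u => u
  | Sum.inr b => b.1

lemma corona_connected (hG : G.Connected) : (corona G H).Connected := by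

  have key : ∀ z : V ⊕ (Σ u, W u), (corona G H).Reachable z (Sum.inl (coronaProj z)) := by
    rintro (u | ⟨u, w⟩)
    · exact Reachable.refl _
    · exact (corona_adj_inr_iff.mpr (Or.inl rfl)).reachable
  have : Nonempty V := hG.nonempty
  rw [connected_iff]
  refine ⟨fun z z' => ?_, ⟨Sum.inl (Classical.arbitrary V)⟩⟩
  · have h2 : (corona G H).Reachable (Sum.inl (coronaProj z)) (Sum.inl (coronaProj z')) :=
      (hG (coronaProj z) (coronaProj z')).map ⟨Sum.inl, fun h => corona_adj_inl_inl.mpr h⟩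
    exact ((key z).trans h2).trans (key z').symm

lemma corona_dist_le_out (hG : G.Connected) (v : V) (a : W v) (z : V ⊕ (Σ u, W u)) :
    (corona G H).dist (Sum.inr ⟨v, a⟩) z ≤ (corona G H).dist (Sum.inl v) z + 1 := by
  obtain ⟨p, hp⟩ := (corona_connected hG).exists_walk_length_eq_dist (Sum.inl v) z
  have e1 : (corona G H).Adj (Sum.inr ⟨v, a⟩) (Sum.inl v) := corona_adj_inr_iff.mpr (Or.inl rfl)
  have := (corona G H).dist_le (SimpleGraph.Walk.cons e1 p)
  simpa [hp] using this

lemma corona_walk_length_lb (v : V) (z : V ⊕ (Σ u, W u))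
    (hz : ∀ b : W v, z ≠ Sum.inr ⟨v, b⟩) :
    ∀ n : ℕ, ∀ (a : W v) (p : (corona G H).Walk (Sum.inr ⟨v, a⟩) z), p.length = n →
      (corona G H).dist (Sum.inl v) z + 1 ≤ n := by
  intro n
  induction n using Nat.strong_induction_on with
  | _ n ih =>
    intro a p hp
    cases p with
    | nil => exact absurd rfl (hz a)
    | @cons _ m _ h q =>
      rcases corona_adj_inr_iff.mp h with hm | ⟨b, hm, -⟩
      · subst hm
        have := (corona G H).dist_le q
        simp only [SimpleGraph.Walk.length_cons] at hp
        omega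
      · subst hm
        simp only [SimpleGraph.Walk.length_cons] at hp
        have := ih q.length (by omega) b q rfl
        omega

lemma corona_dist_out (hG : G.Connected) (v : V) (a : W v) (z : V ⊕ (Σ u, W u))
    (hz : ∀ b : W v, z ≠ Sum.inr ⟨v, b⟩) :
    (corona G H).dist (Sum.inr ⟨v, a⟩) z = (corona G H).dist (Sum.inl v) z + 1 := by
  refine le_antisymm (corona_dist_le_out hG v a z) ?_
  obtain ⟨p, hp⟩ := (corona_connected hG).exists_walk_length_eq_dist (Sum.inr ⟨v, a⟩) z
  exact hp ▸ corona_walk_length_lb v z hz p.length a p rfl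

lemma corona_dist_adj {v : V} {a b : W v} (h : (H v).Adj a b) :
    (corona G H).dist (Sum.inr ⟨v, a⟩) (Sum.inr ⟨v, b⟩) = 1 :=
  SimpleGraph.dist_eq_one_iff_adj.mpr (corona_adj_inr_inr.mpr h)

lemma corona_dist_nonadj (hG : G.Connected) {v : V} {a b : W v} (hab : a ≠ b)
    (h : ¬ (H v).Adj a b) :
    (corona G H).dist (Sum.inr ⟨v, a⟩) (Sum.inr ⟨v, b⟩) = 2 := by
  have e1 : (corona G H).Adj (Sum.inr ⟨v, a⟩) (Sum.inl v) := corona_adj_inr_iff.mpr (Or.inl rfl)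
  have e2 : (corona G H).Adj (Sum.inl v) (Sum.inr ⟨v, b⟩) := corona_adj_inl_inr.mpr rfl
  have h2 := (corona G H).dist_le
    (SimpleGraph.Walk.cons e1 (SimpleGraph.Walk.cons e2 SimpleGraph.Walk.nil))
  simp only [SimpleGraph.Walk.length_cons, SimpleGraph.Walk.length_nil] at h2
  have h0 : (corona G H).dist (Sum.inr ⟨v, a⟩) (Sum.inr ⟨v, b⟩) ≠ 0 := by
    intro h'
    have := (corona_connected (H := H) hG).dist_eq_zero_iff.mp h'
    simp only [Sum.inr.injEq, Sigma.mk.inj_iff, heq_eq_eq, true_and] at this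
    exact hab this
  have h1 : (corona G H).dist (Sum.inr ⟨v, a⟩) (Sum.inr ⟨v, b⟩) ≠ 1 := by
    intro h'
    exact h (corona_adj_inr_inr.mp (SimpleGraph.dist_eq_one_iff_adj.mp h'))
  omega


end Helpers

/-- for two vertices in the same copy `H v` of the corona product, the set of
distinctive vertices equals `(N(x) △ N(y)) ∪ {x,y}` inside that copy. -/
theorem stmt_4 {V : Type*} [Fintype V] [Nontrivial V] {W : V → Type*} [∀ v, Fintype (W v)]
    [∀ v, Nontrivial (W v)] (G : SimpleGraph V) (hG : G.Connected)
    (H : ∀ v, SimpleGraph (W v)) (v : V) (x y : W v) (hxy : x ≠ y) :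
    {z : V ⊕ (Σ u, W u) |
        (corona G H).dist (Sum.inr ⟨v, x⟩) z ≠ (corona G H).dist (Sum.inr ⟨v, y⟩) z} =
      (fun w => (Sum.inr ⟨v, w⟩ : V ⊕ (Σ u, W u))) ''
        (symmDiff ((H v).neighborSet x) ((H v).neighborSet y) ∪ {x, y}) := by
  have hC : (corona G H).Connected := corona_connected hG
  ext z
  simp only [Set.mem_setOf_eq, Set.mem_image]
  cases z with
  | inl u =>
      constructor
      · intro hne
        exfalso
        rw [corona_dist_out hG v x _ (by simp), corona_dist_out hG v y _ (by simp)] at hne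
        exact hne rfl
      · rintro ⟨w, -, hw⟩
        exact absurd hw (by simp)
  | inr b =>
      obtain ⟨u, w⟩ := b
      by_cases huv : u = v
      · subst huv
        have hinj : ∀ w' : W u, (Sum.inr ⟨u, w'⟩ : V ⊕ (Σ u, W u)) = Sum.inr ⟨u, w⟩ ↔ w' = w := by
          intro w'
          simp
        constructor
        · intro hne
          refine ⟨w, ?_, rfl⟩
          by_cases hwx : w = x
          · exact Or.inr (Or.inl hwx)
          by_cases hwy : w = y
          · exact Or.inr (Or.inr hwy)
          left
          rw [Set.mem_symmDiff]
          by_cases hax : (H u).Adj x w <;> by_cases hay : (H u).Adj y w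
          · rw [corona_dist_adj hax, corona_dist_adj hay] at hne
            exact absurd rfl hne
          · exact Or.inl ⟨hax, fun hc => hay hc⟩
          · exact Or.inr ⟨hay, fun hc => hax hc⟩
          · rw [corona_dist_nonadj hG (fun h => hwx h.symm) hax,
              corona_dist_nonadj hG (fun h => hwy h.symm) hay] at hne
            exact absurd rfl hne
        · rintro ⟨w', hw', hww⟩
          rw [hinj] at hww
          subst hww
          by_cases hwx : w' = x
          · subst hwx
            rw [SimpleGraph.dist_self]
            intro h0
            have := hC.dist_eq_zero_iff.mp h0.symm
            simp only [Sum.inr.injEq, Sigma.mk.inj_iff, heq_eq_eq, true_and] at this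
            exact hxy this.symm
          by_cases hwy : w' = y
          · subst hwy
            rw [SimpleGraph.dist_self]
            intro h0
            have := hC.dist_eq_zero_iff.mp h0
            simp only [Sum.inr.injEq, Sigma.mk.inj_iff, heq_eq_eq, true_and] at this
            exact hxy this
          rcases hw' with hsd | hxy'
          · rw [Set.mem_symmDiff] at hsd
            rcases hsd with ⟨hax, hay⟩ | ⟨hay, hax⟩
            · rw [SimpleGraph.mem_neighborSet] at hax
              rw [SimpleGraph.mem_neighborSet] at hay  -- hay : w ∉ N(y)
              rw [corona_dist_adj hax, corona_dist_nonadj hG (fun h => hwy h.symm) hay]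
              omega
            · rw [SimpleGraph.mem_neighborSet] at hay
              rw [SimpleGraph.mem_neighborSet] at hax
              rw [corona_dist_adj hay, corona_dist_nonadj hG (fun h => hwx h.symm) hax]
              omega
          · rcases hxy' with h | h
            · exact absurd h hwx
            · exact absurd h hwy
      · constructor
        · intro hne
          exfalso
          have hz : ∀ b : W v, (Sum.inr ⟨u, w⟩ : V ⊕ (Σ u, W u)) ≠ Sum.inr ⟨v, b⟩ := by
            intro b hb
            simp only [Sum.inr.injEq, Sigma.mk.inj_iff] at hb
            exact huv hb.1
          rw [corona_dist_out hG v x _ hz, corona_dist_out hG v y _ hz] at hne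
          exact hne rfl
        · rintro ⟨w', -, hww⟩
          simp only [Sum.inr.injEq, Sigma.mk.inj_iff] at hww
          exact absurd hww.1.symm huv
end

section
/- For n ≥ 4, the fan graph F_{1,n} = K_1 + P_n is 3-metric dimensional, and for n ≥ 5, the wheel graph W_{1,n} = K_1 + C_n is 4-metric dimensional. -/
open SimpleGraph

section K1
attribute [local instance] Classical.propDecidable
variable {U : Type*} {H : SimpleGraph U}

lemma K1_adj_none_some (a : U) : (K1join H).Adj none (some a) := by
  simp [K1join, SimpleGraph.fromRel_adj]

lemma K1_adj_some_some (a b : U) : (K1join H).Adj (some a) (some b) ↔ H.Adj a b := by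
  simp only [K1join, SimpleGraph.fromRel_adj]
  constructor
  · rintro ⟨-, h | h⟩
    · exact h
    · exact h.symm
  · intro h
    exact ⟨by simpa using h.ne, Or.inl h⟩

lemma K1_dist (u w : Option U) :
    (K1join H).dist u w = if w = u then 0 else if (K1join H).Adj u w then 1 else 2 := by
  split_ifs with h1 h2
  · subst h1; exact SimpleGraph.dist_self
  · exact SimpleGraph.dist_eq_one_iff_adj.mpr h2
  · match u, w with
    | none, none => exact absurd rfl h1
    | none, some a => exact absurd (K1_adj_none_some a) h2
    | some a, none => exact absurd (K1_adj_none_some a).symm h2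
    | some a, some b =>
      have hle := SimpleGraph.dist_le
          (Walk.cons (K1_adj_none_some (H:=H) a).symm (Walk.cons (K1_adj_none_some b) Walk.nil))
      simp only [Walk.length_cons, Walk.length_nil] at hle
      have h0 : (K1join H).dist (some a) (some b) ≠ 0 := by
        rw [Ne, SimpleGraph.dist_eq_zero_iff_eq_or_not_reachable]
        push_neg
        exact ⟨fun h => h1 h.symm,
          ⟨Walk.cons (K1_adj_none_some (H:=H) a).symm (Walk.cons (K1_adj_none_some b) Walk.nil)⟩⟩
      have h1' : (K1join H).dist (some a) (some b) ≠ 1 := fun h =>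
        h2 (SimpleGraph.dist_eq_one_iff_adj.mp h)
      omega

lemma K1_distinguish {u v : Option U} (huv : u ≠ v) (w : Option U) :
    (K1join H).dist u w ≠ (K1join H).dist v w ↔
      (w = u ∨ w = v ∨ ((K1join H).Adj u w ↔ ¬ (K1join H).Adj v w)) := by
  rw [K1_dist u w, K1_dist v w]
  by_cases h1 : w = u <;> by_cases h2 : w = v <;>
    by_cases h3 : (K1join H).Adj u w <;> by_cases h4 : (K1join H).Adj v w <;>
    simp_all

end K1

lemma kdim_of {V : Type*} [Fintype V] (G : SimpleGraph V) (k : ℕ)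
    (hlow : ∀ u v : V, u ≠ v →
      ∃ T : Finset V, k ≤ T.card ∧ ∀ w ∈ T, G.dist u w ≠ G.dist v w)
    (u₀ v₀ : V) (h₀ : u₀ ≠ v₀) (D : Finset V)
    (hD : ∀ w : V, G.dist u₀ w ≠ G.dist v₀ w → w ∈ D) (hcard : D.card ≤ k) :
    kMetricDimensional G k := by
  constructor
  · refine ⟨Set.univ, fun u v huv => ?_⟩
    obtain ⟨T, h1, h2⟩ := hlow u v huv
    exact ⟨T, by simp, h1, h2⟩
  · rintro k' ⟨S, hS⟩
    obtain ⟨T, _, hTcard, hTd⟩ := hS u₀ v₀ h₀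
    have hsub : T ⊆ D := fun w hw => hD w (hTd w hw)
    exact hTcard.trans ((Finset.card_le_card hsub).trans hcard)

/-- linearized adjacency for `cycleGraph m` -/
def cycA (m x y : ℕ) : Prop :=
  x + 1 = y ∨ y + 1 = x ∨ (x = 0 ∧ y + 1 = m) ∨ (y = 0 ∧ x + 1 = m)

lemma finsub_val {m : ℕ} (hm : 2 ≤ m) (u v : Fin m) :
    (u - v).val = 1 ↔ (v.val + 1 = u.val ∨ (u.val = 0 ∧ v.val + 1 = m)) := by
  rcases u with ⟨x, hx⟩; rcases v with ⟨y, hy⟩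
  rw [Fin.sub_def]
  simp only [Fin.val_mk]
  rcases le_or_gt y x with h | h
  · have hxy : m - y + x = (x - y) + m := by omega
    rw [hxy, Nat.add_mod_right, Nat.mod_eq_of_lt (by omega)]
    omega
  · rw [Nat.mod_eq_of_lt (by omega)]
    omega

lemma cycleGraph_adj_iff {m : ℕ} (hm : 2 ≤ m) (u v : Fin m) :
    (SimpleGraph.cycleGraph m).Adj u v ↔ cycA m u.val v.val := by
  rw [SimpleGraph.cycleGraph_adj', finsub_val hm, finsub_val hm, cycA]
  tauto

lemma path_nonadj (n b : ℕ) (hn : 4 ≤ n) (hb : b < n) :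
    ∃ c, c < n ∧ c ≠ b ∧ ¬(c + 1 = b ∨ b + 1 = c) := by
  rcases le_or_gt 2 b with h | h
  · exact ⟨0, by omega⟩
  · exact ⟨3, by omega⟩

lemma path_pair_lt (n a b : ℕ) (hn : 4 ≤ n) (hb : b < n) (hab : a < b) :
    ∃ c, c < n ∧ c ≠ a ∧ c ≠ b ∧
      ((c + 1 = a ∨ a + 1 = c) ↔ ¬(c + 1 = b ∨ b + 1 = c)) := by
  by_cases hb1 : b = a + 1
  · by_cases ha0 : 0 < a
    · exact ⟨a - 1, by omega⟩
    · exact ⟨b + 1, by omega⟩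
  · by_cases hb2 : b = a + 2
    · by_cases hbn : b + 1 < n
      · exact ⟨b + 1, by omega⟩
      · exact ⟨a - 1, by omega⟩
    · exact ⟨a + 1, by omega⟩

lemma path_pair (n a b : ℕ) (hn : 4 ≤ n) (ha : a < n) (hb : b < n) (hab : a ≠ b) :
    ∃ c, c < n ∧ c ≠ a ∧ c ≠ b ∧
      ((c + 1 = a ∨ a + 1 = c) ↔ ¬(c + 1 = b ∨ b + 1 = c)) := by
  rcases lt_or_gt_of_ne hab with h | h
  · exact path_pair_lt n a b hn hb h
  · obtain ⟨c, h1, h2, h3, h4⟩ := path_pair_lt n b a hn ha h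
    exact ⟨c, h1, h3, h2, by tauto⟩

lemma cyc_nonadj (m b : ℕ) (hm : 5 ≤ m) (hb : b < m) :
    ∃ c₁ c₂, c₁ < m ∧ c₂ < m ∧ c₁ ≠ c₂ ∧ c₁ ≠ b ∧ c₂ ≠ b ∧
      ¬cycA m b c₁ ∧ ¬cycA m b c₂ := by
  unfold cycA
  by_cases h1 : b + 3 < m
  · exact ⟨b + 2, b + 3, by omega⟩
  · by_cases h2 : b + 3 = m
    · exact ⟨m - 1, 0, by omega⟩
    · by_cases h3 : b + 2 = m
      · exact ⟨0, 1, by omega⟩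
      · exact ⟨1, 2, by omega⟩

lemma cyc_pair_lt (m a b : ℕ) (hm : 5 ≤ m) (hb : b < m) (hab : a < b) :
    ∃ c₁ c₂, c₁ < m ∧ c₂ < m ∧ c₁ ≠ c₂ ∧ c₁ ≠ a ∧ c₁ ≠ b ∧ c₂ ≠ a ∧ c₂ ≠ b ∧
      (cycA m a c₁ ↔ ¬cycA m b c₁) ∧ (cycA m a c₂ ↔ ¬cycA m b c₂) := by
  unfold cycA
  by_cases hg1 : b = a + 1
  · by_cases ha0 : a = 0
    · exact ⟨m - 1, 2, by omega⟩
    · by_cases hbm : b = m - 1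
      · exact ⟨m - 3, 0, by omega⟩
      · exact ⟨a - 1, b + 1, by omega⟩
  · by_cases hg2 : b = a + 2
    · by_cases ha0 : a = 0
      · exact ⟨m - 1, b + 1, by omega⟩
      · by_cases hbm : b = m - 1
        · exact ⟨a - 1, 0, by omega⟩
        · exact ⟨a - 1, b + 1, by omega⟩
    · by_cases hgm1 : b = a + (m - 1)
      · exact ⟨1, m - 2, by omega⟩
      · by_cases hgm2 : b = a + (m - 2)
        · by_cases ha0 : a = 0
          · exact ⟨1, m - 3, by omega⟩
          · exact ⟨2, m - 2, by omega⟩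
        · exact ⟨a + 1, b - 1, by omega⟩

lemma cyc_pair (m a b : ℕ) (hm : 5 ≤ m) (ha : a < m) (hb : b < m) (hab : a ≠ b) :
    ∃ c₁ c₂, c₁ < m ∧ c₂ < m ∧ c₁ ≠ c₂ ∧ c₁ ≠ a ∧ c₁ ≠ b ∧ c₂ ≠ a ∧ c₂ ≠ b ∧
      (cycA m a c₁ ↔ ¬cycA m b c₁) ∧ (cycA m a c₂ ↔ ¬cycA m b c₂) := by
  rcases lt_or_gt_of_ne hab with h | h
  · exact cyc_pair_lt m a b hm hb h
  · obtain ⟨c₁, c₂, h1, h2, h3, h4, h5, h6, h7, h8, h9⟩ := cyc_pair_lt m b a hm ha h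
    exact ⟨c₁, c₂, h1, h2, h3, h5, h4, h7, h6, iff_not_comm.mp h8, iff_not_comm.mp h9⟩

lemma card3_le {α : Type*} [DecidableEq α] (a b c : α) : ({a, b, c} : Finset α).card ≤ 3 := by
  refine le_trans (Finset.card_insert_le _ _) (Nat.succ_le_succ ?_)
  refine le_trans (Finset.card_insert_le _ _) (Nat.succ_le_succ ?_)
  simp

lemma card4_le {α : Type*} [DecidableEq α] (a b c d : α) :
    ({a, b, c, d} : Finset α).card ≤ 4 := by
  refine le_trans (Finset.card_insert_le _ _) (Nat.succ_le_succ (card3_le _ _ _))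

section T
variable {U : Type*} [DecidableEq U] {H : SimpleGraph U}

lemma T3 {u v x : Option U} (huv : u ≠ v) (hxu : x ≠ u) (hxv : x ≠ v)
    (hx : (K1join H).Adj u x ↔ ¬ (K1join H).Adj v x) :
    ∃ T : Finset (Option U), 3 ≤ T.card ∧
      ∀ w ∈ T, (K1join H).dist u w ≠ (K1join H).dist v w := by
  refine ⟨{u, v, x}, ?_, ?_⟩
  · have h1 : v ∉ ({x} : Finset (Option U)) := by simp [hxv.symm]
    have h2 : u ∉ ({v, x} : Finset (Option U)) := by simp [huv, hxu.symm]
    rw [Finset.card_insert_of_notMem h2, Finset.card_insert_of_notMem h1,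
      Finset.card_singleton]
  · intro w hw
    rw [K1_distinguish huv]
    simp only [Finset.mem_insert, Finset.mem_singleton] at hw
    rcases hw with rfl | rfl | rfl
    · exact Or.inl rfl
    · exact Or.inr (Or.inl rfl)
    · exact Or.inr (Or.inr hx)

lemma T4 {u v x y : Option U} (huv : u ≠ v) (hxu : x ≠ u) (hxv : x ≠ v)
    (hyu : y ≠ u) (hyv : y ≠ v) (hxy : x ≠ y)
    (hx : (K1join H).Adj u x ↔ ¬ (K1join H).Adj v x)
    (hy : (K1join H).Adj u y ↔ ¬ (K1join H).Adj v y) :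
    ∃ T : Finset (Option U), 4 ≤ T.card ∧
      ∀ w ∈ T, (K1join H).dist u w ≠ (K1join H).dist v w := by
  refine ⟨{u, v, x, y}, ?_, ?_⟩
  · have h1 : x ∉ ({y} : Finset (Option U)) := by simp [hxy]
    have h2 : v ∉ ({x, y} : Finset (Option U)) := by simp [hxv.symm, hyv.symm]
    have h3 : u ∉ ({v, x, y} : Finset (Option U)) := by simp [huv, hxu.symm, hyu.symm]
    rw [Finset.card_insert_of_notMem h3, Finset.card_insert_of_notMem h2,
      Finset.card_insert_of_notMem h1, Finset.card_singleton]
  · intro w hw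
    rw [K1_distinguish huv]
    simp only [Finset.mem_insert, Finset.mem_singleton] at hw
    rcases hw with rfl | rfl | rfl | rfl
    · exact Or.inl rfl
    · exact Or.inr (Or.inl rfl)
    · exact Or.inr (Or.inr hx)
    · exact Or.inr (Or.inr hy)

end T

lemma fan_low (n : ℕ) (hn : 4 ≤ n) (u v : Option (Fin n)) (huv : u ≠ v) :
    ∃ T : Finset (Option (Fin n)), 3 ≤ T.card ∧
      ∀ w ∈ T, (K1join (pathGraph n)).dist u w ≠ (K1join (pathGraph n)).dist v w := by
  match u, v with
  | none, none => exact absurd rfl huv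
  | none, some b =>
    obtain ⟨c, hc1, hc2, hc3⟩ := path_nonadj n b.val hn b.isLt
    refine T3 huv (x := some ⟨c, hc1⟩) (by simp) (by simp [Fin.ext_iff, hc2]) ?_
    simp only [K1_adj_none_some, K1_adj_some_some, pathGraph_adj, true_iff]
    omega
  | some b, none =>
    obtain ⟨c, hc1, hc2, hc3⟩ := path_nonadj n b.val hn b.isLt
    refine T3 huv (x := some ⟨c, hc1⟩) (by simp [Fin.ext_iff, hc2]) (by simp) ?_
    simp only [K1_adj_none_some, K1_adj_some_some, pathGraph_adj, not_true, iff_false]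
    omega
  | some a, some b =>
    have hab : a.val ≠ b.val := fun h => huv (by simp [Fin.ext_iff, h])
    obtain ⟨c, h1, h2, h3, h4⟩ := path_pair n a.val b.val hn a.isLt b.isLt hab
    refine T3 huv (x := some ⟨c, h1⟩) (by simp [Fin.ext_iff, h2]) (by simp [Fin.ext_iff, h3]) ?_
    simp only [K1_adj_some_some, pathGraph_adj]
    constructor
    · intro h; omega
    · intro h; omega

lemma wheel_low (m : ℕ) (hm : 5 ≤ m) (u v : Option (Fin m)) (huv : u ≠ v) :
    ∃ T : Finset (Option (Fin m)), 4 ≤ T.card ∧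
      ∀ w ∈ T, (K1join (cycleGraph m)).dist u w ≠ (K1join (cycleGraph m)).dist v w := by
  have hm2 : 2 ≤ m := by omega
  match u, v with
  | none, none => exact absurd rfl huv
  | none, some b =>
    obtain ⟨c₁, c₂, h1, h2, h3, h4, h5, h6, h7⟩ := cyc_nonadj m b.val hm b.isLt
    refine T4 huv (x := some ⟨c₁, h1⟩) (y := some ⟨c₂, h2⟩) (by simp) (by simp [Fin.ext_iff, h4])
      (by simp) (by simp [Fin.ext_iff, h5]) (by simp [Fin.ext_iff, h3]) ?_ ?_ <;>
    · simp only [K1_adj_none_some, K1_adj_some_some, cycleGraph_adj_iff hm2, true_iff]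
      assumption
  | some b, none =>
    obtain ⟨c₁, c₂, h1, h2, h3, h4, h5, h6, h7⟩ := cyc_nonadj m b.val hm b.isLt
    refine T4 huv (x := some ⟨c₁, h1⟩) (y := some ⟨c₂, h2⟩) (by simp [Fin.ext_iff, h4]) (by simp)
      (by simp [Fin.ext_iff, h5]) (by simp) (by simp [Fin.ext_iff, h3]) ?_ ?_ <;>
    · simp only [K1_adj_none_some, K1_adj_some_some, cycleGraph_adj_iff hm2, not_true, iff_false]
      assumption
  | some a, some b =>
    have hab : a.val ≠ b.val := fun h => huv (by simp [Fin.ext_iff, h])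
    obtain ⟨c₁, c₂, h1, h2, h3, h4, h5, h6, h7, h8, h9⟩ :=
      cyc_pair m a.val b.val hm a.isLt b.isLt hab
    refine T4 huv (x := some ⟨c₁, h1⟩) (y := some ⟨c₂, h2⟩) (by simp [Fin.ext_iff, h4])
      (by simp [Fin.ext_iff, h5]) (by simp [Fin.ext_iff, h6]) (by simp [Fin.ext_iff, h7])
      (by simp [Fin.ext_iff, h3]) ?_ ?_
    · simpa only [K1_adj_some_some, cycleGraph_adj_iff hm2] using h8
    · simpa only [K1_adj_some_some, cycleGraph_adj_iff hm2] using h9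


/-- for `n ≥ 4` the fan `F_{1,n} = K₁ + P_n` is 3-metric dimensional, and
for `m ≥ 5` the wheel `W_{1,m} = K₁ + C_m` is 4-metric dimensional. -/
theorem stmt_9 (n m : ℕ) (hn : 4 ≤ n) (hm : 5 ≤ m) :
    kMetricDimensional (K1join (SimpleGraph.pathGraph n)) 3 ∧
      kMetricDimensional (K1join (SimpleGraph.cycleGraph m)) 4 := by
  constructor
  · have h₀ : (some ⟨0, by omega⟩ : Option (Fin n)) ≠ some ⟨2, by omega⟩ := by
      simp [Fin.ext_iff]
    refine kdim_of _ 3 (fan_low n hn) _ _ h₀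
      {some ⟨0, by omega⟩, some ⟨2, by omega⟩, some ⟨3, by omega⟩} ?_ (card3_le _ _ _)
    intro w hw
    rw [K1_distinguish h₀] at hw
    rcases hw with rfl | rfl | hx
    · simp
    · simp
    · match w with
      | none =>
        exact absurd (hx.mp (K1_adj_none_some _).symm) (not_not.mpr (K1_adj_none_some _).symm)
      | some c =>
        rw [K1_adj_some_some, K1_adj_some_some, pathGraph_adj, pathGraph_adj] at hx
        have hlt := c.isLt
        simp only [Fin.val_mk] at hx
        simp only [Finset.mem_insert, Finset.mem_singleton, Option.some.injEq, Fin.ext_iff,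
          Fin.val_mk]
        omega
  · have hm2 : 2 ≤ m := by omega
    have h₀ : (some ⟨0, by omega⟩ : Option (Fin m)) ≠ some ⟨2, by omega⟩ := by
      simp [Fin.ext_iff]
    refine kdim_of _ 4 (wheel_low m hm) _ _ h₀
      {some ⟨0, by omega⟩, some ⟨2, by omega⟩, some ⟨3, by omega⟩, some ⟨m - 1, by omega⟩} ?_
      (card4_le _ _ _ _)
    intro w hw
    rw [K1_distinguish h₀] at hw
    rcases hw with rfl | rfl | hx
    · simp
    · simp
    · match w with
      | none =>
        exact absurd (hx.mp (K1_adj_none_some _).symm) (not_not.mpr (K1_adj_none_some _).symm)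
      | some c =>
        rw [K1_adj_some_some, K1_adj_some_some, cycleGraph_adj_iff hm2,
          cycleGraph_adj_iff hm2] at hx
        unfold cycA at hx
        have hlt := c.isLt
        simp only [Fin.val_mk] at hx
        simp only [Finset.mem_insert, Finset.mem_singleton, Option.some.injEq, Fin.ext_iff,
          Fin.val_mk]
        omega
end
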